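/- Let z₀ ∈ Z with X-conjugacy class C, and for each z ∈ C fix z̄ ∈ X with z = z̄⁻¹z₀z̄. If J ⊆ J_{z₀} is an irreducible subrepresentation of the centralizer X_{z₀} (under the linearized ⋊̃-action), then M_J = ⊕_{z∈C}(J ⋊̃ z̄) is an irreducible crossed submodule of k[X]. Moreover, if J_{z₀} = J₁ ⊕ … ⊕ J_n is a decomposition into irreducible X_{z₀}-subrepresentations, then M_C := span_k ‖·‖⁻¹(C) = M_{J₁} ⊕ … ⊕ M_{J_n} is a decomposition of M_C into irreducible crossed submodules. -/

import Mathlib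

/-- The linearization of the right action `⋊̃ y` on `k[X] = X →₀ k`. -/
noncomputable def linTact (k : Type*) [Field k] {X : Type*} (tact : X → X → X) (y : X) :
    (X →₀ k) →ₗ[k] (X →₀ k) :=
  Finsupp.lmapDomain k k (fun x => tact x y)

/-- The homogeneous component `J_z = span_k ‖·‖⁻¹(z)` of `k[X]`. -/
noncomputable def Jsub (k : Type*) [Field k] {X : Type*} (norm : X → X) (z : X) :
    Submodule k (X →₀ k) :=
  Submodule.span k ((fun x => Finsupp.single x (1 : k)) '' (norm ⁻¹' {z}))

/-- A subspace `V ⊆ k[X]` is a crossed submodule if it is stable under the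
linearized `⋊̃`-action of `X` and `V = ⊕_{z∈Z}(V ∩ J_z)`. -/
def IsCrossedSubmodule (k : Type*) [Field k] {X : Type*} (norm : X → X)
    (tact : X → X → X) (V : Submodule k (X →₀ k)) : Prop :=
  (∀ y : X, V.map (linTact k tact y) ≤ V) ∧
  V = ⨆ z ∈ Set.range norm, V ⊓ Jsub k norm z

/-- A crossed submodule is irreducible if it is nonzero and the only crossed
submodules contained in it are `0` and itself. -/
def IsIrreducibleCrossedSubmodule (k : Type*) [Field k] {X : Type*} (norm : X → X)
    (tact : X → X → X) (V : Submodule k (X →₀ k)) : Prop :=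
  V ≠ ⊥ ∧ IsCrossedSubmodule k norm tact V ∧
    ∀ W : Submodule k (X →₀ k), IsCrossedSubmodule k norm tact W → W ≤ V → W = ⊥ ∨ W = V

/-- `J` is an irreducible subrepresentation of the centralizer of `z₀` inside
`J_{z₀}`, for the linearized `⋊̃`-action. -/
def IsIrreducibleCentralizerSubrep (k : Type*) [Field k] {X : Type*} [Group X]
    (norm : X → X) (tact : X → X → X) (z₀ : X) (J : Submodule k (X →₀ k)) : Prop :=
  J ≤ Jsub k norm z₀ ∧ J ≠ ⊥ ∧
    (∀ x ∈ Subgroup.centralizer ({z₀} : Set X), J.map (linTact k tact x) ≤ J) ∧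
    ∀ J' : Submodule k (X →₀ k), J' ≤ J →
      (∀ x ∈ Subgroup.centralizer ({z₀} : Set X), J'.map (linTact k tact x) ≤ J') →
      J' = ⊥ ∨ J' = J

/-!
Refactoring through `X = M G` shows that `⋊̃` is a right action of `X` on itself along which
`‖·‖` is equivariant, `‖x ⋊̃ y‖ = y⁻¹ ‖x‖ y`. Hence `k[X] = ⊕_z J_z` is graded and `⋊̃ y` carries
`J_z` onto `J_{y⁻¹ z y}`, so `M_J` is graded with component `J ⋊̃ z̄` in each degree `z ∈ C`.
A nonzero crossed submodule `W ⊆ M_J` has a nonzero component, which the action moves into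
degree `z₀`; there `W ∩ J_{z₀} ⊆ J` is stable under the centralizer, hence equal to `J`, and the
orbit of `J` spans `M_J`. Since each `⋊̃ z̄` is injective and the construction is componentwise,
it preserves independence and sums, and `J_{z₀} ⋊̃ z̄ = J_z` gives `M_C`.
-/

structure IsRightAction {X : Type*} [Group X] (tact : X → X → X) : Prop where
  tact_one : ∀ x, tact x 1 = x
  tact_tact : ∀ x y y', tact (tact x y) y' = tact x (y * y')

section ExactFactorization

variable {X : Type*} [Group X] {G M : Subgroup X}
  (hbij : Function.Bijective (fun p : ↥G × ↥M => (p.1 : X) * (p.2 : X)))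
include hbij

theorem eq_and_eq_of_mul_eq_mul {a a' : G} {b b' : M} (h : (a : X) * b = a' * b') :
    a = a' ∧ b = b' :=
  Prod.ext_iff.mp (hbij.injective (a₁ := (a, b)) (a₂ := (a', b')) h)

theorem exists_mul_eq (x : X) : ∃ (a : G) (b : M), (a : X) * b = x :=
  let ⟨p, hp⟩ := hbij.surjective x; ⟨p.1, p.2, hp⟩

theorem exists_mul_eq_swap (x : X) : ∃ (b : M) (a : G), (b : X) * a = x := by
  obtain ⟨a, b, h⟩ := exists_mul_eq hbij x⁻¹
  exact ⟨b⁻¹, a⁻¹, by rw [← inv_inv x, ← h]; simp⟩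

variable {rho : ↥M → ↥G → ↥G} {sig : ↥M → ↥G → ↥M}
  (hfact : ∀ (s : ↥M) (u : ↥G), (s : X) * (u : X) = (rho s u : X) * (sig s u : X))
  {tact : X → X → X}
  (htact : ∀ (v u : ↥G) (t s : ↥M),
    tact ((v : X) * (t : X)) ((u : X) * (s : X)) =
      (rho (sig s⁻¹ (v * u)⁻¹) (v * u) : X) *
        ((sig s⁻¹ (v * u)⁻¹ : X) * (t : X) * (sig s⁻¹ (v * u)⁻¹ : X)⁻¹))
include hfact htact

theorem tact_eq_of_mul_eq {v g : G} {t m : M} {y : X} (h : (v : X) * y = m * g) :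
    tact (v * t) y = g * (m⁻¹ * t * m) := by
  obtain ⟨u, s, rfl⟩ := exists_mul_eq hbij y
  have hvu : (v : X) * u = m * g * (s : X)⁻¹ := by rw [← h]; group
  obtain ⟨-, hsig⟩ : rho s⁻¹ (v * u)⁻¹ = g⁻¹ ∧ sig s⁻¹ (v * u)⁻¹ = m⁻¹ := by
    refine eq_and_eq_of_mul_eq_mul hbij ((hfact _ _).symm.trans ?_)
    push_cast
    rw [hvu]
    group
  have hrho : rho m⁻¹ (v * u) = g := by
    refine (eq_and_eq_of_mul_eq_mul hbij (b' := s⁻¹) ((hfact _ _).symm.trans ?_)).1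
    push_cast
    rw [hvu]
    group
  rw [htact, hsig, hrho]
  push_cast
  group

theorem isRightAction_tact : IsRightAction tact where
  tact_one x := by
    obtain ⟨v, t, rfl⟩ := exists_mul_eq hbij x
    rw [tact_eq_of_mul_eq hbij hfact htact (m := 1) (g := v) (by simp)]
    simp
  tact_tact x y y' := by
    obtain ⟨v, t, rfl⟩ := exists_mul_eq hbij x
    obtain ⟨m, g, hy⟩ := exists_mul_eq_swap hbij (v * y)
    obtain ⟨m', g', hy'⟩ := exists_mul_eq_swap hbij (g * y')
    have hyy' : (v : X) * (y * y') = ↑(m * m') * g' := by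
      rw [← mul_assoc, ← hy, mul_assoc, ← hy']
      push_cast
      group
    rw [tact_eq_of_mul_eq hbij hfact htact hy.symm, ← Subgroup.coe_mul, ← Subgroup.coe_mul,
      tact_eq_of_mul_eq hbij hfact htact hy'.symm, tact_eq_of_mul_eq hbij hfact htact hyy']
    push_cast
    group

theorem norm_tact {norm : X → X}
    (hnorm : ∀ (v : ↥G) (t : ↥M), norm ((v : X) * (t : X)) = (v : X)⁻¹ * (t : X)⁻¹ * (v : X))
    (x y : X) : norm (tact x y) = y⁻¹ * norm x * y := by
  obtain ⟨v, t, rfl⟩ := exists_mul_eq hbij x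
  obtain ⟨m, g, hy⟩ := exists_mul_eq_swap hbij (v * y)
  have hy' : y = (v : X)⁻¹ * m * g := by rw [mul_assoc, hy]; group
  rw [tact_eq_of_mul_eq hbij hfact htact hy.symm, ← Subgroup.coe_mul, ← Subgroup.coe_mul,
    hnorm, hnorm, hy']
  push_cast
  group

end ExactFactorization

section Linearization

variable {k : Type*} [Field k] {X : Type*} {tact : X → X → X}

theorem linTact_single (y x : X) (c : k) :
    linTact k tact y (Finsupp.single x c) = Finsupp.single (tact x y) c :=
  Finsupp.mapDomain_single

variable [Group X]

theorem IsRightAction.linTact_comp (ht : IsRightAction tact) (y y' : X) :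
    (linTact k tact y').comp (linTact k tact y) = linTact k tact (y * y') :=
  Finsupp.lhom_ext fun _ _ => by simp [linTact_single, ht.tact_tact]

theorem IsRightAction.linTact_one (ht : IsRightAction tact) :
    linTact k tact (1 : X) = LinearMap.id :=
  Finsupp.lhom_ext fun _ _ => by simp [linTact_single, ht.tact_one]

theorem IsRightAction.map_linTact_map (ht : IsRightAction tact) (V : Submodule k (X →₀ k))
    (y y' : X) :
    (V.map (linTact k tact y)).map (linTact k tact y') = V.map (linTact k tact (y * y')) := by
  rw [← Submodule.map_comp, ht.linTact_comp]

theorem IsRightAction.linTact_injective (ht : IsRightAction tact) (y : X) :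
    Function.Injective (linTact k tact y) :=
  Function.LeftInverse.injective (g := linTact k tact y⁻¹) fun f => by
    rw [← LinearMap.comp_apply, ht.linTact_comp, mul_inv_cancel, ht.linTact_one,
      LinearMap.id_apply]

theorem IsRightAction.map_linTact_eq_self (ht : IsRightAction tact) {H : Subgroup X}
    {V : Submodule k (X →₀ k)} (hV : ∀ y ∈ H, V.map (linTact k tact y) ≤ V) {y : X}
    (hy : y ∈ H) : V.map (linTact k tact y) = V := by
  refine le_antisymm (hV y hy) ?_
  calc V = (V.map (linTact k tact y⁻¹)).map (linTact k tact y) := by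
        rw [ht.map_linTact_map, inv_mul_cancel, ht.linTact_one, Submodule.map_id]
    _ ≤ V.map (linTact k tact y) := Submodule.map_mono (hV _ (inv_mem hy))

end Linearization

section Grading

theorem Jsub_eq_supported (k : Type*) [Field k] {X : Type*} (norm : X → X) (z : X) :
    Jsub k norm z = Finsupp.supported k k (norm ⁻¹' {z}) :=
  (Finsupp.supported_eq_span_single k _).symm

variable {k : Type*} [Field k] {X : Type*} {norm : X → X}

theorem mem_Jsub_iff {z : X} {w : X →₀ k} :
    w ∈ Jsub k norm z ↔ ∀ x, w x ≠ 0 → norm x = z := by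
  rw [Jsub_eq_supported, Finsupp.mem_supported']
  exact forall_congr' fun x => not_imp_comm

theorem Jsub_eq_bot {z : X} (hz : z ∉ Set.range norm) : Jsub k norm z = ⊥ := by
  rw [Jsub_eq_supported, Set.preimage_singleton_eq_empty.mpr hz, Finsupp.supported_empty]

theorem filter_mem_of_mem_iSup [DecidableEq X] {f : X → Submodule k (X →₀ k)}
    (hf : ∀ z, f z ≤ Jsub k norm z) {w : X →₀ k} (hw : w ∈ ⨆ z, f z) (z : X) :
    w.filter (fun x => norm x = z) ∈ f z := by
  refine Submodule.iSup_induction f (motive := fun w => w.filter (norm · = z) ∈ f z) hw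
    (fun z' w hw => ?_) (by simp only [Finsupp.filter_zero, zero_mem])
    fun w w' hw hw' => by rw [Finsupp.filter_add]; exact add_mem hw hw'
  have hdeg := mem_Jsub_iff.mp (hf z' hw)
  by_cases hz : z' = z
  · subst hz
    rwa [(Finsupp.filter_eq_self_iff _ _).mpr hdeg]
  · rw [(Finsupp.filter_eq_zero_iff _ _).mpr fun x hx => not_not.mp fun h => hz (hdeg x h ▸ hx)]
    exact zero_mem _

theorem iSup_inf_Jsub_le {f : X → Submodule k (X →₀ k)} (hf : ∀ z, f z ≤ Jsub k norm z)
    (z : X) : (⨆ z, f z) ⊓ Jsub k norm z ≤ f z := by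
  classical
  rintro w ⟨hw, hwz⟩
  rw [← (Finsupp.filter_eq_self_iff _ w).mpr (mem_Jsub_iff.mp hwz)]
  exact filter_mem_of_mem_iSup hf hw z

theorem disjoint_iSup_of_le_Jsub {f g : X → Submodule k (X →₀ k)}
    (hf : ∀ z, f z ≤ Jsub k norm z) (hg : ∀ z, g z ≤ Jsub k norm z)
    (hfg : ∀ z, Disjoint (f z) (g z)) : Disjoint (⨆ z, f z) (⨆ z, g z) := by
  classical
  refine Submodule.disjoint_def.mpr fun w hwf hwg => Finsupp.ext fun x => ?_
  have hx := Submodule.disjoint_def.mp (hfg (norm x)) _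
    (filter_mem_of_mem_iSup hf hwf (norm x)) (filter_mem_of_mem_iSup hg hwg (norm x))
  simpa using DFunLike.congr_fun hx x

theorem iSup_eq_iSup_range_inf_Jsub {f : X → Submodule k (X →₀ k)}
    (hf : ∀ z, f z ≤ Jsub k norm z) :
    ⨆ z, f z = ⨆ z ∈ Set.range norm, (⨆ z, f z) ⊓ Jsub k norm z := by
  refine le_antisymm (iSup_le fun z => ?_) (iSup₂_le fun _ _ => inf_le_left)
  by_cases hz : z ∈ Set.range norm
  · exact (le_inf (le_iSup f z) (hf z)).trans (le_biSup (fun z => (⨆ z, f z) ⊓ Jsub k norm z) hz)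
  · exact (hf z).trans ((Jsub_eq_bot hz).trans_le bot_le)

end Grading

section Equivariance

variable {k : Type*} [Field k] {X : Type*} [Group X] {norm : X → X} {tact : X → X → X}
  (ht : IsRightAction tact) (hnorm : ∀ x y, norm (tact x y) = y⁻¹ * norm x * y)
include ht hnorm

theorem image_tact_preimage_norm (z y : X) :
    (fun x => tact x y) '' (norm ⁻¹' {z}) = norm ⁻¹' {y⁻¹ * z * y} := by
  ext w
  constructor
  · rintro ⟨x, rfl, rfl⟩
    exact hnorm x y
  · intro hw
    refine ⟨tact w y⁻¹, ?_, by simp only [ht.tact_tact, inv_mul_cancel, ht.tact_one]⟩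
    simp only [Set.mem_preimage, Set.mem_singleton_iff] at hw ⊢
    rw [hnorm, hw]
    group

theorem map_linTact_Jsub (z y : X) :
    (Jsub k norm z).map (linTact k tact y) = Jsub k norm (y⁻¹ * z * y) := by
  rw [Jsub_eq_supported, Jsub_eq_supported, linTact, Finsupp.lmapDomain_supported,
    image_tact_preimage_norm ht hnorm]

theorem map_linTact_inf_Jsub (V : Submodule k (X →₀ k)) (z y : X) :
    (V ⊓ Jsub k norm z).map (linTact k tact y) =
      V.map (linTact k tact y) ⊓ Jsub k norm (y⁻¹ * z * y) := by
  rw [Submodule.map_inf _ (ht.linTact_injective y), map_linTact_Jsub ht hnorm]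

end Equivariance

theorem inv_mul_mul_eq_self_iff_mem_centralizer {X : Type*} [Group X] {z c : X} :
    c⁻¹ * z * c = z ↔ c ∈ Subgroup.centralizer {z} := by
  rw [Subgroup.mem_centralizer_singleton_iff, mul_assoc, inv_mul_eq_iff_eq_mul, eq_comm]

/-- `M_J = ⊕_{z ∈ C} (J ⋊̃ z̄)`. -/
noncomputable def inducedCrossedSubmodule (k : Type*) [Field k] {X : Type*} [Monoid X]
    (tact : X → X → X) (z₀ : X) (zbar : X → X) (J : Submodule k (X →₀ k)) :
    Submodule k (X →₀ k) :=
  ⨆ z : {z : X // IsConj z₀ z}, J.map (linTact k tact (zbar z))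

/-- The summand `J ⋊̃ z̄` of `M_J` lying in `J_z`, or `0` when `z ∉ C`. -/
noncomputable def inducedComponent (k : Type*) [Field k] {X : Type*} [Monoid X]
    (tact : X → X → X) (z₀ : X) (zbar : X → X) (J : Submodule k (X →₀ k)) (z : X) :
    Submodule k (X →₀ k) :=
  ⨆ _ : IsConj z₀ z, J.map (linTact k tact (zbar z))

section Induction

variable {k : Type*} [Field k] {X : Type*} [Group X] {tact : X → X → X}
  {z₀ : X} {zbar : X → X}

theorem inducedCrossedSubmodule_eq_iSup_inducedComponent (J : Submodule k (X →₀ k)) :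
    inducedCrossedSubmodule k tact z₀ zbar J = ⨆ z, inducedComponent k tact z₀ zbar J z := by
  simp only [inducedCrossedSubmodule, inducedComponent, iSup_subtype']

theorem inducedCrossedSubmodule_iSup {ι : Sort*} (J : ι → Submodule k (X →₀ k)) :
    inducedCrossedSubmodule k tact z₀ zbar (⨆ i, J i) =
      ⨆ i, inducedCrossedSubmodule k tact z₀ zbar (J i) := by
  simp only [inducedCrossedSubmodule, Submodule.map_iSup]
  exact iSup_comm

variable (hzbar : ∀ z : X, IsConj z₀ z → z = (zbar z)⁻¹ * z₀ * zbar z)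
include hzbar

theorem zbar_self_mem_centralizer : zbar z₀ ∈ Subgroup.centralizer {z₀} :=
  inv_mul_mul_eq_self_iff_mem_centralizer.mp (hzbar z₀ (IsConj.refl z₀)).symm

theorem zbar_mul_mul_inv_zbar_mem_centralizer {z : X} (hz : IsConj z₀ z) (y : X) :
    zbar z * y * (zbar (y⁻¹ * z * y))⁻¹ ∈ Subgroup.centralizer {z₀} := by
  have hw : IsConj z₀ (y⁻¹ * z * y) := hz.trans (isConj_iff.mpr ⟨y⁻¹, by group⟩)
  generalize hw_def : y⁻¹ * z * y = w at hw ⊢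
  rw [← inv_mul_mul_eq_self_iff_mem_centralizer]
  calc (zbar z * y * (zbar w)⁻¹)⁻¹ * z₀ * (zbar z * y * (zbar w)⁻¹)
      = zbar w * (y⁻¹ * ((zbar z)⁻¹ * z₀ * zbar z) * y) * (zbar w)⁻¹ := by group
    _ = zbar w * ((zbar w)⁻¹ * z₀ * zbar w) * (zbar w)⁻¹ := by
      rw [← hzbar z hz, hw_def, ← hzbar w hw]
    _ = z₀ := by group

variable (ht : IsRightAction tact) {J : Submodule k (X →₀ k)}
  (hJ : ∀ c ∈ Subgroup.centralizer {z₀}, J.map (linTact k tact c) ≤ J)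
include ht hJ

/-- `zbar z * y` and `zbar (y⁻¹ * z * y)` differ by an element of the centralizer, which
fixes `J`. -/
theorem map_map_linTact_zbar {z : X} (hz : IsConj z₀ z) (y : X) :
    (J.map (linTact k tact (zbar z))).map (linTact k tact y) =
      J.map (linTact k tact (zbar (y⁻¹ * z * y))) := by
  have hc := zbar_mul_mul_inv_zbar_mem_centralizer hzbar hz y
  rw [ht.map_linTact_map, ← inv_mul_cancel_right (zbar z * y) (zbar (y⁻¹ * z * y)),
    ← ht.map_linTact_map, ht.map_linTact_eq_self hJ hc]

theorem le_inducedCrossedSubmodule : J ≤ inducedCrossedSubmodule k tact z₀ zbar J := by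
  conv_lhs => rw [← ht.map_linTact_eq_self hJ (zbar_self_mem_centralizer hzbar)]
  exact le_iSup (fun z : {z : X // IsConj z₀ z} => J.map (linTact k tact (zbar z)))
    ⟨z₀, IsConj.refl z₀⟩

theorem map_inducedCrossedSubmodule_le (y : X) :
    (inducedCrossedSubmodule k tact z₀ zbar J).map (linTact k tact y) ≤
      inducedCrossedSubmodule k tact z₀ zbar J := by
  rw [inducedCrossedSubmodule, Submodule.map_iSup]
  refine iSup_le fun z => ?_
  rw [map_map_linTact_zbar hzbar ht hJ z.2]
  exact le_iSup (fun z : {z : X // IsConj z₀ z} => J.map (linTact k tact (zbar z)))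
    ⟨_, z.2.trans (isConj_iff.mpr ⟨y⁻¹, by group⟩)⟩

end Induction

section Irreducible

variable {k : Type*} [Field k] {X : Type*} [Group X] {norm : X → X} {tact : X → X → X}
  {z₀ : X} {zbar : X → X}

theorem inducedCrossedSubmodule_le {J W : Submodule k (X →₀ k)}
    (hW : ∀ y, W.map (linTact k tact y) ≤ W) (hJW : J ≤ W) :
    inducedCrossedSubmodule k tact z₀ zbar J ≤ W :=
  iSup_le fun _ => (Submodule.map_mono hJW).trans (hW _)

variable (hzbar : ∀ z : X, IsConj z₀ z → z = (zbar z)⁻¹ * z₀ * zbar z)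
  (ht : IsRightAction tact) (hnorm : ∀ x y, norm (tact x y) = y⁻¹ * norm x * y)
include hzbar ht hnorm

theorem inducedComponent_le_Jsub {J : Submodule k (X →₀ k)} (hJ₀ : J ≤ Jsub k norm z₀)
    (z : X) : inducedComponent k tact z₀ zbar J z ≤ Jsub k norm z :=
  iSup_le fun hz => calc
    J.map (linTact k tact (zbar z)) ≤ (Jsub k norm z₀).map (linTact k tact (zbar z)) :=
      Submodule.map_mono hJ₀
    _ = Jsub k norm z := by rw [map_linTact_Jsub ht hnorm, ← hzbar z hz]

theorem inducedCrossedSubmodule_inf_Jsub_le {J : Submodule k (X →₀ k)}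
    (hJ₀ : J ≤ Jsub k norm z₀) (z : X) :
    inducedCrossedSubmodule k tact z₀ zbar J ⊓ Jsub k norm z ≤
      inducedComponent k tact z₀ zbar J z := by
  rw [inducedCrossedSubmodule_eq_iSup_inducedComponent]
  exact iSup_inf_Jsub_le (inducedComponent_le_Jsub hzbar ht hnorm hJ₀) z

theorem disjoint_inducedCrossedSubmodule {J J' : Submodule k (X →₀ k)}
    (hJ₀ : J ≤ Jsub k norm z₀) (hJ₀' : J' ≤ Jsub k norm z₀) (hJJ' : Disjoint J J') :
    Disjoint (inducedCrossedSubmodule k tact z₀ zbar J)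
      (inducedCrossedSubmodule k tact z₀ zbar J') := by
  rw [inducedCrossedSubmodule_eq_iSup_inducedComponent,
    inducedCrossedSubmodule_eq_iSup_inducedComponent]
  refine disjoint_iSup_of_le_Jsub (inducedComponent_le_Jsub hzbar ht hnorm hJ₀)
    (inducedComponent_le_Jsub hzbar ht hnorm hJ₀') fun z => ?_
  by_cases hz : IsConj z₀ z
  · simp only [inducedComponent, iSup_pos hz]
    exact Submodule.disjoint_map (ht.linTact_injective _) hJJ'
  · simp only [inducedComponent, iSup_neg hz, disjoint_bot_left]

theorem inducedCrossedSubmodule_Jsub :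
    inducedCrossedSubmodule k tact z₀ zbar (Jsub k norm z₀) =
      Submodule.span k
        ((fun x => Finsupp.single x (1 : k)) '' (norm ⁻¹' {z : X | IsConj z₀ z})) := calc
  _ = ⨆ z : {z : X // IsConj z₀ z}, Finsupp.supported k k (norm ⁻¹' {(z : X)}) :=
      iSup_congr fun z => by rw [map_linTact_Jsub ht hnorm, ← hzbar z z.2, Jsub_eq_supported]
  _ = Finsupp.supported k k (norm ⁻¹' {z : X | IsConj z₀ z}) := by
      rw [← Finsupp.supported_iUnion]
      congr 1
      ext x
      simp
  _ = _ := Finsupp.supported_eq_span_single k _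

variable {J : Submodule k (X →₀ k)} (hJ₀ : J ≤ Jsub k norm z₀)
include hJ₀

/-- A nonzero crossed submodule of `M_J` has a nonzero homogeneous component, necessarily in
degree conjugate to `z₀`, and transporting it by the action gives one in degree `z₀`. -/
theorem inf_Jsub_ne_bot_of_le_inducedCrossedSubmodule {W : Submodule k (X →₀ k)}
    (hW : IsCrossedSubmodule k norm tact W) (hWJ : W ≤ inducedCrossedSubmodule k tact z₀ zbar J)
    (hW₀ : W ≠ ⊥) : W ⊓ Jsub k norm z₀ ≠ ⊥ := by
  obtain ⟨hWstab, hWgr⟩ := hW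
  obtain ⟨z, -, hz⟩ : ∃ z ∈ Set.range norm, W ⊓ Jsub k norm z ≠ ⊥ := by
    by_contra! h
    exact hW₀ (le_bot_iff.mp (hWgr.trans_le (iSup₂_le fun z hz => (h z hz).le)))
  have hzC : IsConj z₀ z := by
    by_contra hzC
    refine hz (le_bot_iff.mp ?_)
    calc W ⊓ Jsub k norm z
        ≤ inducedCrossedSubmodule k tact z₀ zbar J ⊓ Jsub k norm z := inf_le_inf_right _ hWJ
      _ ≤ inducedComponent k tact z₀ zbar J z :=
        inducedCrossedSubmodule_inf_Jsub_le hzbar ht hnorm hJ₀ z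
      _ = ⊥ := iSup_neg hzC
  obtain ⟨c, hc⟩ := isConj_iff.mp hzC
  have htransport := map_linTact_inf_Jsub ht hnorm W z₀ c⁻¹
  rw [ht.map_linTact_eq_self (H := ⊤) (fun y _ => hWstab y) trivial, inv_inv, hc] at htransport
  intro h
  rw [h, Submodule.map_bot] at htransport
  exact hz htransport.symm

variable (hJ : ∀ c ∈ Subgroup.centralizer {z₀}, J.map (linTact k tact c) ≤ J)
include hJ

theorem isCrossedSubmodule_inducedCrossedSubmodule :
    IsCrossedSubmodule k norm tact (inducedCrossedSubmodule k tact z₀ zbar J) := by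
  refine ⟨map_inducedCrossedSubmodule_le hzbar ht hJ, ?_⟩
  rw [inducedCrossedSubmodule_eq_iSup_inducedComponent]
  exact iSup_eq_iSup_range_inf_Jsub (inducedComponent_le_Jsub hzbar ht hnorm hJ₀)

end Irreducible

theorem IsIrreducibleCentralizerSubrep.isIrreducibleCrossedSubmodule_inducedCrossedSubmodule
    {k : Type*} [Field k] {X : Type*} [Group X] {norm : X → X} {tact : X → X → X}
    {z₀ : X} {zbar : X → X} (hzbar : ∀ z : X, IsConj z₀ z → z = (zbar z)⁻¹ * z₀ * zbar z)
    (ht : IsRightAction tact) (hnorm : ∀ x y, norm (tact x y) = y⁻¹ * norm x * y)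
    {J : Submodule k (X →₀ k)} (hJ : IsIrreducibleCentralizerSubrep k norm tact z₀ J) :
    IsIrreducibleCrossedSubmodule k norm tact (inducedCrossedSubmodule k tact z₀ zbar J) := by
  obtain ⟨hJ₀, hJne, hJstab, hJirr⟩ := hJ
  refine ⟨fun h => hJne (le_bot_iff.mp (h ▸ le_inducedCrossedSubmodule hzbar ht hJstab)),
    isCrossedSubmodule_inducedCrossedSubmodule hzbar ht hnorm hJ₀ hJstab,
    fun W hW hWJ => or_iff_not_imp_left.mpr fun hW₀ => ?_⟩
  have hWJ₀ : W ⊓ Jsub k norm z₀ ≤ J := calc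
    W ⊓ Jsub k norm z₀ ≤ inducedCrossedSubmodule k tact z₀ zbar J ⊓ Jsub k norm z₀ :=
      inf_le_inf_right _ hWJ
    _ ≤ inducedComponent k tact z₀ zbar J z₀ :=
      inducedCrossedSubmodule_inf_Jsub_le hzbar ht hnorm hJ₀ z₀
    _ = J := (iSup_pos (IsConj.refl z₀)).trans
      (ht.map_linTact_eq_self hJstab (zbar_self_mem_centralizer hzbar))
  have hWJ₀stab : ∀ c ∈ Subgroup.centralizer {z₀},
      (W ⊓ Jsub k norm z₀).map (linTact k tact c) ≤ W ⊓ Jsub k norm z₀ := fun c hc => by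
    rw [map_linTact_inf_Jsub ht hnorm, inv_mul_mul_eq_self_iff_mem_centralizer.mpr hc]
    exact inf_le_inf_right _ (hW.1 c)
  have hWJ₀eq : W ⊓ Jsub k norm z₀ = J := (hJirr _ hWJ₀ hWJ₀stab).resolve_left
    (inf_Jsub_ne_bot_of_le_inducedCrossedSubmodule hzbar ht hnorm hJ₀ hW hWJ hW₀)
  exact le_antisymm hWJ (inducedCrossedSubmodule_le hW.1 (hWJ₀eq ▸ inf_le_left))

theorem irreducible_crossed_submodules_from_centralizer_reps_general
    {k X : Type*} [Field k] [Group X] (G M : Subgroup X)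
    (hbij : Function.Bijective (fun p : ↥G × ↥M => (p.1 : X) * (p.2 : X)))
    (rho : ↥M → ↥G → ↥G) (sig : ↥M → ↥G → ↥M)
    (hfact : ∀ (s : ↥M) (u : ↥G), (s : X) * (u : X) = (rho s u : X) * (sig s u : X))
    (norm : X → X)
    (hnorm : ∀ (v : ↥G) (t : ↥M), norm ((v : X) * (t : X)) = (v : X)⁻¹ * (t : X)⁻¹ * (v : X))
    (tact : X → X → X)
    (htact : ∀ (v u : ↥G) (t s : ↥M),
      tact ((v : X) * (t : X)) ((u : X) * (s : X)) =
        (rho (sig s⁻¹ (v * u)⁻¹) (v * u) : X) *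
          ((sig s⁻¹ (v * u)⁻¹ : X) * (t : X) * (sig s⁻¹ (v * u)⁻¹ : X)⁻¹))
    (z₀ : X)
    (zbar : X → X) (hzbar : ∀ z : X, IsConj z₀ z → z = (zbar z)⁻¹ * z₀ * zbar z) :
    (∀ J : Submodule k (X →₀ k), IsIrreducibleCentralizerSubrep k norm tact z₀ J →
      IsIrreducibleCrossedSubmodule k norm tact
        (⨆ z : {z : X // IsConj z₀ z}, J.map (linTact k tact (zbar z)))) ∧
    (∀ (n : ℕ) (Ji : Fin n → Submodule k (X →₀ k)),
      (∀ i, IsIrreducibleCentralizerSubrep k norm tact z₀ (Ji i)) →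
      iSupIndep Ji → (⨆ i, Ji i) = Jsub k norm z₀ →
      (∀ i, IsIrreducibleCrossedSubmodule k norm tact
        (⨆ z : {z : X // IsConj z₀ z}, (Ji i).map (linTact k tact (zbar z)))) ∧
      iSupIndep (fun i : Fin n =>
        ⨆ z : {z : X // IsConj z₀ z}, (Ji i).map (linTact k tact (zbar z))) ∧
      (⨆ i : Fin n, ⨆ z : {z : X // IsConj z₀ z}, (Ji i).map (linTact k tact (zbar z)))
        = Submodule.span k
            ((fun x => Finsupp.single x (1 : k)) '' (norm ⁻¹' {z : X | IsConj z₀ z}))) := by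
  have ht := isRightAction_tact hbij hfact htact
  have hnorm' := norm_tact hbij hfact htact hnorm
  have hM (J : Submodule k (X →₀ k)) (hJ : IsIrreducibleCentralizerSubrep k norm tact z₀ J) :=
    hJ.isIrreducibleCrossedSubmodule_inducedCrossedSubmodule (zbar := zbar) hzbar ht hnorm'
  refine ⟨hM, fun n Ji hJi hindep hsum => ⟨fun i => hM _ (hJi i), ?_, ?_⟩⟩
  · refine iSupIndep_def.mpr fun i => ?_
    change Disjoint (inducedCrossedSubmodule k tact z₀ zbar (Ji i))
      (⨆ (j) (_ : j ≠ i), inducedCrossedSubmodule k tact z₀ zbar (Ji j))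
    simp only [← inducedCrossedSubmodule_iSup]
    exact disjoint_inducedCrossedSubmodule hzbar ht hnorm' (hJi i).1
      (iSup₂_le fun j _ => (hJi j).1) (iSupIndep_def.mp hindep i)
  · change ⨆ i, inducedCrossedSubmodule k tact z₀ zbar (Ji i) = _
    rw [← inducedCrossedSubmodule_iSup, hsum, inducedCrossedSubmodule_Jsub hzbar ht hnorm']

/-- **Irreducible crossed submodules from irreducible centralizer representations.**
Let `z₀ ∈ Z` with class `C` and fixed conjugators `z̄`.  If `J ⊆ J_{z₀}` is an
irreducible subrepresentation of the centralizer `X_{z₀}` then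
`M_J = ⊕_{z∈C}(J ⋊̃ z̄)` is an irreducible crossed submodule of `k[X]`; and if
`J_{z₀} = J₁ ⊕ … ⊕ J_n` is a decomposition into irreducible
`X_{z₀}`-subrepresentations, then `M_C = span_k ‖·‖⁻¹(C) = M_{J₁} ⊕ … ⊕ M_{J_n}`
is a decomposition into irreducible crossed submodules. -/
theorem irreducible_crossed_submodules_from_centralizer_reps
    {k X : Type*} [Field k] [Group X] [Fintype X] (G M : Subgroup X)
    (hbij : Function.Bijective (fun p : ↥G × ↥M => (p.1 : X) * (p.2 : X)))
    (rho : ↥M → ↥G → ↥G) (sig : ↥M → ↥G → ↥M)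
    (hfact : ∀ (s : ↥M) (u : ↥G), (s : X) * (u : X) = (rho s u : X) * (sig s u : X))
    (norm : X → X)
    (hnorm : ∀ (v : ↥G) (t : ↥M), norm ((v : X) * (t : X)) = (v : X)⁻¹ * (t : X)⁻¹ * (v : X))
    (tact : X → X → X)
    (htact : ∀ (v u : ↥G) (t s : ↥M),
      tact ((v : X) * (t : X)) ((u : X) * (s : X)) =
        (rho (sig s⁻¹ (v * u)⁻¹) (v * u) : X) *
          ((sig s⁻¹ (v * u)⁻¹ : X) * (t : X) * (sig s⁻¹ (v * u)⁻¹ : X)⁻¹))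
    (z₀ : X) (hz₀ : z₀ ∈ Set.range norm)
    (zbar : X → X) (hzbar : ∀ z : X, IsConj z₀ z → z = (zbar z)⁻¹ * z₀ * zbar z) :
    (∀ J : Submodule k (X →₀ k), IsIrreducibleCentralizerSubrep k norm tact z₀ J →
      IsIrreducibleCrossedSubmodule k norm tact
        (⨆ z : {z : X // IsConj z₀ z}, J.map (linTact k tact (zbar z)))) ∧
    (∀ (n : ℕ) (Ji : Fin n → Submodule k (X →₀ k)),
      (∀ i, IsIrreducibleCentralizerSubrep k norm tact z₀ (Ji i)) →
      iSupIndep Ji → (⨆ i, Ji i) = Jsub k norm z₀ →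
      (∀ i, IsIrreducibleCrossedSubmodule k norm tact
        (⨆ z : {z : X // IsConj z₀ z}, (Ji i).map (linTact k tact (zbar z)))) ∧
      iSupIndep (fun i : Fin n =>
        ⨆ z : {z : X // IsConj z₀ z}, (Ji i).map (linTact k tact (zbar z))) ∧
      (⨆ i : Fin n, ⨆ z : {z : X // IsConj z₀ z}, (Ji i).map (linTact k tact (zbar z)))
        = Submodule.span k
            ((fun x => Finsupp.single x (1 : k)) '' (norm ⁻¹' {z : X | IsConj z₀ z}))) :=
  irreducible_crossed_submodules_from_centralizer_reps_general G M hbij rho sig hfact norm hnorm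
    tact htact z₀ zbar hzbar
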